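/- The 48 triangular lattice points in a closed (3,4)-equiangular hexagon form a 19-distance set whose squared distance set contains 49 but not 48; in particular, its 19 distances are not the 19 smallest distances occurring in the triangular lattice. -/

import Mathlib

/-- Triangular lattice point a•(1,0) + b•(1/2, √3/2). -/
noncomputable def tri (a b : ℤ) : ℝ × ℝ :=
  ((a : ℝ) + (b : ℝ) / 2, (b : ℝ) * Real.sqrt 3 / 2)

/-- Squared Euclidean distance in the plane. -/
def sqd (p q : ℝ × ℝ) : ℝ := (p.1 - q.1) ^ 2 + (p.2 - q.2) ^ 2

/-- The triangular lattice. -/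
noncomputable def triLattice : Set (ℝ × ℝ) := {p | ∃ a b : ℤ, p = tri a b}

/-- Closed regular hexagon of side `k` centered at the origin with a vertex at `(k,0)`. -/
noncomputable def hexR (k : ℤ) : Set (ℝ × ℝ) :=
  convexHull ℝ ({tri k 0, tri 0 k, tri (-k) k, tri (-k) 0, tri 0 (-k), tri k (-k)} : Set (ℝ × ℝ))

/-- Closed (k, k+1)-equiangular hexagon with vertices at lattice points. -/
noncomputable def hexE (k : ℤ) : Set (ℝ × ℝ) :=
  convexHull ℝ ({tri k 0, tri k (k+1), tri 0 (2*k+1), tri (-(k+1)) (2*k+1),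
    tri (-(k+1)) (k+1), tri 0 0} : Set (ℝ × ℝ))

/-- Set of squared distances between distinct points of `X`. -/
def sqdSet (X : Set (ℝ × ℝ)) : Set ℝ := {d | ∃ p ∈ X, ∃ q ∈ X, p ≠ q ∧ d = sqd p q}

/-!
In lattice coordinates `(a, b) ↦ a•(1,0) + b•(1/2, √3/2)` the squared distance is the Löschian
form `a² + ab + b²`, and the `(k, k+1)`-hexagon is cut out by `0 ≤ b ≤ 2k+1`, `-(k+1) ≤ a ≤ k`,
`0 ≤ a + b ≤ 2k+1`. For `k = 3` what remains is a finite computation: the 48 lattice points have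
as pairwise squared distances the 18 Löschian numbers below 48 together with 49. The value 48 is
missed because its only representations are `±(4,4)`, `±(-4,8)`, `±(8,-4)`, each of which changes
one of `a + b`, `b`, `a` by 8, more than the width 7 of the hexagon in that direction.
-/

noncomputable def triMap : (ℝ × ℝ) →ₗ[ℝ] ℝ × ℝ where
  toFun p := (p.1 + p.2 / 2, p.2 * Real.sqrt 3 / 2)
  map_add' p q := by ext <;> simp only [Prod.fst_add, Prod.snd_add] <;> ring
  map_smul' c p := by
    ext <;> simp only [Prod.smul_fst, Prod.smul_snd, smul_eq_mul, RingHom.id_apply] <;> ring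

theorem tri_eq_triMap (a b : ℤ) : tri a b = triMap (a, b) := rfl

theorem triMap_injective : Function.Injective triMap := by
  intro p q h
  obtain ⟨h1, h2⟩ := Prod.mk.inj (h : (p.1 + p.2 / 2, p.2 * Real.sqrt 3 / 2) =
    (q.1 + q.2 / 2, q.2 * Real.sqrt 3 / 2))
  have h2' : p.2 = q.2 := mul_right_cancel₀ (b := Real.sqrt 3) (by positivity) (by linarith [h2])
  exact Prod.ext (by linarith [h1]) h2'

theorem uncurry_tri_injective : Function.Injective (Function.uncurry tri) := by
  intro p q h
  have hcast := @triMap_injective (p.1, p.2) (q.1, q.2) h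
  simp only [Prod.ext_iff, Int.cast_inj] at hcast
  exact Prod.ext hcast.1 hcast.2

def latticeSqDist (p q : ℤ × ℤ) : ℤ :=
  (p.1 - q.1) ^ 2 + (p.1 - q.1) * (p.2 - q.2) + (p.2 - q.2) ^ 2

theorem sqd_tri (p q : ℤ × ℤ) :
    sqd (Function.uncurry tri p) (Function.uncurry tri q) = latticeSqDist p q := by
  have h3 : Real.sqrt 3 ^ 2 = 3 := Real.sq_sqrt (by norm_num)
  simp only [sqd, Function.uncurry, tri, latticeSqDist]
  push_cast
  linear_combination ((p.2 - q.2 : ℝ) ^ 2 / 4) * h3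

def latticeSqDists (s : Finset (ℤ × ℤ)) : Finset ℤ :=
  s.offDiag.image fun pq => latticeSqDist pq.1 pq.2

theorem sqdSet_image_tri (s : Finset (ℤ × ℤ)) :
    sqdSet (Function.uncurry tri '' s) = ((↑) : ℤ → ℝ) '' latticeSqDists s := by
  ext d
  simp only [sqdSet, latticeSqDists, Set.mem_ofPred_eq, Set.mem_image, Finset.coe_image,
    Finset.coe_offDiag, Set.mem_offDiag, Finset.mem_coe, exists_exists_and_eq_and]
  constructor
  · rintro ⟨p, hp, q, hq, hpq, rfl⟩
    exact ⟨(p, q), ⟨hp, hq, fun h => hpq (congrArg _ h)⟩, (sqd_tri p q).symm⟩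
  · rintro ⟨⟨p, q⟩, ⟨hp, hq, hpq⟩, rfl⟩
    exact ⟨p, hp, q, hq, uncurry_tri_injective.ne hpq, (sqd_tri p q).symm⟩

theorem mk_mem_segment_left {x₁ x₂ x : ℝ} (y : ℝ) (h₁ : x₁ ≤ x) (h₂ : x ≤ x₂) :
    (x, y) ∈ segment ℝ (x₁, y) (x₂, y) := by
  rw [← Prod.image_mk_segment_left, segment_eq_Icc (h₁.trans h₂)]
  exact ⟨x, ⟨h₁, h₂⟩, rfl⟩

theorem mk_mem_segment_right (x : ℝ) {y₁ y₂ y : ℝ} (h₁ : y₁ ≤ y) (h₂ : y ≤ y₂) :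
    (x, y) ∈ segment ℝ (x, y₁) (x, y₂) := by
  rw [← Prod.image_mk_segment_right, segment_eq_Icc (h₁.trans h₂)]
  exact ⟨y, ⟨h₁, h₂⟩, rfl⟩

theorem sub_mk_mem_segment (c : ℝ) {y₁ y₂ y : ℝ} (h₁ : y₁ ≤ y) (h₂ : y ≤ y₂) :
    (c - y, y) ∈ segment ℝ (c - y₁, y₁) (c - y₂, y₂) := by
  let f : ℝ →ᵃ[ℝ] ℝ × ℝ := AffineMap.lineMap (c, 0) (c - 1, 1)
  have hf : ∀ t, f t = (c - t, t) := fun t => by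
    simp only [f, AffineMap.lineMap_apply, vsub_eq_sub, vadd_eq_add, Prod.mk_sub_mk,
      Prod.smul_mk, Prod.mk_add_mk, smul_eq_mul]
    ext <;> ring
  rw [← hf, ← hf, ← hf, ← image_segment, segment_eq_Icc (h₁.trans h₂)]
  exact Set.mem_image_of_mem f ⟨h₁, h₂⟩

section Hexagon

variable (k : ℝ)

def hexVertices : Set (ℝ × ℝ) :=
  {(k, 0), (k, k + 1), (0, 2 * k + 1), (-(k + 1), 2 * k + 1), (-(k + 1), k + 1), (0, 0)}

def hexRegion : Set (ℝ × ℝ) :=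
  {p | 0 ≤ p.2 ∧ p.2 ≤ 2 * k + 1 ∧ -(k + 1) ≤ p.1 ∧ p.1 ≤ k ∧
    0 ≤ p.1 + p.2 ∧ p.1 + p.2 ≤ 2 * k + 1}

theorem convex_hexRegion : Convex ℝ (hexRegion k) := by
  rintro p ⟨h1, h2, h3, h4, h5, h6⟩ q ⟨k1, k2, k3, k4, k5, k6⟩ s t hs ht hst
  refine ⟨?_, ?_, ?_, ?_, ?_, ?_⟩ <;>
    simp only [Prod.fst_add, Prod.snd_add, Prod.smul_fst, Prod.smul_snd, smul_eq_mul] <;>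
    nlinarith

variable {k}

/-- Each point lies on a horizontal chord whose endpoints lie on two opposite edges. -/
theorem hexRegion_subset_convexHull : hexRegion k ⊆ convexHull ℝ (hexVertices k) := by
  rintro ⟨x, y⟩ ⟨h1, h2, h3, h4, h5, h6⟩
  have hconv := convex_convexHull ℝ (hexVertices k)
  have hv : ∀ v ∈ hexVertices k, v ∈ convexHull ℝ (hexVertices k) :=
    fun v hv => subset_convexHull ℝ _ hv
  rcases le_total y (k + 1) with hy | hy
  · have hL : (0 - y, y) ∈ convexHull ℝ (hexVertices k) :=
      hconv.segment_subset (hv (0, 0) (by simp [hexVertices]))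
        (hv (-(k + 1), k + 1) (by simp [hexVertices])) (by simpa using sub_mk_mem_segment 0 h1 hy)
    have hR : (k, y) ∈ convexHull ℝ (hexVertices k) :=
      hconv.segment_subset (hv (k, 0) (by simp [hexVertices]))
        (hv (k, k + 1) (by simp [hexVertices])) (mk_mem_segment_right k h1 hy)
    exact hconv.segment_subset hL hR (mk_mem_segment_left y (by linarith) h4)
  · have hL : (-(k + 1), y) ∈ convexHull ℝ (hexVertices k) :=
      hconv.segment_subset (hv (-(k + 1), k + 1) (by simp [hexVertices]))
        (hv (-(k + 1), 2 * k + 1) (by simp [hexVertices])) (mk_mem_segment_right _ hy h2)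
    have hR : (2 * k + 1 - y, y) ∈ convexHull ℝ (hexVertices k) := by
      have hedge := sub_mk_mem_segment (2 * k + 1) hy h2
      rw [show 2 * k + 1 - (k + 1) = k by ring, sub_self] at hedge
      exact hconv.segment_subset (hv (k, k + 1) (by simp [hexVertices]))
        (hv (0, 2 * k + 1) (by simp [hexVertices])) hedge
    exact hconv.segment_subset hL hR (mk_mem_segment_left y h3 (by linarith))

theorem convexHull_hexVertices (hk : 0 ≤ k) : convexHull ℝ (hexVertices k) = hexRegion k := by
  refine (convexHull_min ?_ (convex_hexRegion k)).antisymm hexRegion_subset_convexHull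
  intro p hp
  simp only [hexVertices, Set.mem_insert_iff, Set.mem_singleton_iff] at hp
  rcases hp with rfl | rfl | rfl | rfl | rfl | rfl <;>
    refine ⟨?_, ?_, ?_, ?_, ?_, ?_⟩ <;> dsimp only <;> linarith

end Hexagon

theorem hexE_eq_image (k : ℤ) : hexE k = triMap '' convexHull ℝ (hexVertices k) := by
  simp only [hexE, LinearMap.image_convexHull, hexVertices, Set.image_insert_eq,
    Set.image_singleton, tri_eq_triMap]
  push_cast
  rfl

theorem tri_mem_hexE_iff {k : ℤ} (hk : 0 ≤ k) (a b : ℤ) :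
    tri a b ∈ hexE k ↔
      0 ≤ b ∧ b ≤ 2 * k + 1 ∧ -(k + 1) ≤ a ∧ a ≤ k ∧ 0 ≤ a + b ∧ a + b ≤ 2 * k + 1 := by
  rw [hexE_eq_image, tri_eq_triMap, triMap_injective.mem_set_image,
    convexHull_hexVertices (by exact_mod_cast hk)]
  simp only [hexRegion, Set.mem_ofPred_eq]
  norm_cast

noncomputable def hexPoints (k : ℤ) : Finset (ℤ × ℤ) :=
  (Finset.Icc (-(k + 1)) k ×ˢ Finset.Icc 0 (2 * k + 1)).filter
    fun p => 0 ≤ p.1 + p.2 ∧ p.1 + p.2 ≤ 2 * k + 1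

theorem triLattice_inter_hexE {k : ℤ} (hk : 0 ≤ k) :
    triLattice ∩ hexE k = Function.uncurry tri '' hexPoints k := by
  ext p
  simp only [triLattice, hexPoints, Set.mem_inter_iff, Set.mem_ofPred_eq, Set.mem_image,
    Finset.coe_filter, Finset.mem_product, Finset.mem_Icc, Prod.exists, Function.uncurry_apply_pair]
  constructor
  · rintro ⟨⟨a, b, rfl⟩, hp⟩
    obtain ⟨h1, h2, h3, h4, h5, h6⟩ := (tri_mem_hexE_iff hk a b).1 hp
    exact ⟨a, b, ⟨⟨⟨h3, h4⟩, h1, h2⟩, h5, h6⟩, rfl⟩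
  · rintro ⟨a, b, ⟨⟨⟨h3, h4⟩, h1, h2⟩, h5, h6⟩, rfl⟩
    exact ⟨⟨a, b, rfl⟩, (tri_mem_hexE_iff hk a b).2 ⟨h1, h2, h3, h4, h5, h6⟩⟩

set_option maxRecDepth 100000 in
theorem latticeSqDists_hexPoints_three : latticeSqDists (hexPoints 3) =
    {1, 3, 4, 7, 9, 12, 13, 16, 19, 21, 25, 27, 28, 31, 36, 37, 39, 43, 49} := by
  decide

theorem equiangular_3_4_hexagon_nineteen_distance :
    (triLattice ∩ hexE 3).ncard = 48 ∧
      (sqdSet (triLattice ∩ hexE 3)).ncard = 19 ∧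
      (49 : ℝ) ∈ sqdSet (triLattice ∩ hexE 3) ∧
      (48 : ℝ) ∉ sqdSet (triLattice ∩ hexE 3) := by
  rw [triLattice_inter_hexE (by norm_num), sqdSet_image_tri, latticeSqDists_hexPoints_three]
  refine ⟨?_, ?_, ⟨49, by decide, by norm_num⟩, ?_⟩
  · rw [Set.ncard_image_of_injective _ uncurry_tri_injective, Set.ncard_coe_finset]
    decide
  · rw [Set.ncard_image_of_injective _ Int.cast_injective, Set.ncard_coe_finset]
    rfl
  · rintro ⟨n, hn, hn48⟩
    obtain rfl : n = 48 := by exact_mod_cast hn48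
    revert hn
    decide
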